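/- arXiv:2007.08561 — 2 statements merged into one kernel-verified Lean document; each statement's English description precedes it below -/
import Mathlib

section
/- Under the setup of the basic Lasso inequality, if additionally ‖X^⊤Δ‖₂² ≥ C·t·‖Δ‖₂² for some C > 0 (restricted eigenvalue condition on the cone C(S;3)) and λ = 2σR√(2t·log(2d/δ)), then ‖Δ‖₂ ≤ (3σR/C)·√(2k·log(2d/δ)/t). -/
/-!
The restricted eigenvalue condition and the basic inequality sandwich `‖X^⊤Δ‖₂²`:
`C t ‖Δ‖₂² ≤ ‖X^⊤Δ‖₂² ≤ (3/2) λ ‖Δ_S‖₁ ≤ (3/2) λ √k ‖Δ‖₂`, the last step by Cauchy–Schwarz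
on the `k` coordinates of `S`. Dividing by `‖Δ‖₂` and substituting `λ` gives the rate.
-/

open Finset

lemma sum_abs_le_sqrt_card_mul_sqrt_sum_sq {ι : Type*} [Fintype ι] (S : Finset ι) (x : ι → ℝ) :
    ∑ i ∈ S, |x i| ≤ √(#S : ℝ) * √(∑ i, x i ^ 2) := by
  rw [← Real.sqrt_mul (Nat.cast_nonneg _)]
  refine Real.le_sqrt_of_sq_le ?_
  calc (∑ i ∈ S, |x i|) ^ 2 ≤ (#S : ℝ) * ∑ i ∈ S, |x i| ^ 2 := sq_sum_le_card_mul_sum_sq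
    _ = (#S : ℝ) * ∑ i ∈ S, x i ^ 2 := by simp only [sq_abs]
    _ ≤ (#S : ℝ) * ∑ i, x i ^ 2 := by
      gcongr
      exact subset_univ S

/-- The `Sᶜ`-part enters the basic inequality with net coefficient `-λ/2`, so it can be dropped. -/
lemma le_of_le_basic_lasso {ι : Type*} [Fintype ι] [DecidableEq ι] (S : Finset ι) (Δ : ι → ℝ)
    {Q lam : ℝ} (hlam : 0 ≤ lam)
    (hbasic : Q ≤ lam / 2 * (∑ i, |Δ i|) + lam * ((∑ i ∈ S, |Δ i|) - ∑ i ∈ Sᶜ, |Δ i|)) :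
    Q ≤ 3 / 2 * lam * ∑ i ∈ S, |Δ i| := by
  rw [← sum_add_sum_compl S] at hbasic
  have hSc : 0 ≤ lam * ∑ i ∈ Sᶜ, |Δ i| :=
    mul_nonneg hlam (sum_nonneg fun i _ => abs_nonneg _)
  linarith

lemma le_div_of_mul_sq_le_mul {a b c : ℝ} (hc : 0 < c) (ha : 0 ≤ a) (hb : 0 ≤ b)
    (h : c * a ^ 2 ≤ b * a) : a ≤ b / c := by
  rcases ha.eq_or_lt with rfl | ha
  · exact div_nonneg hb hc.le
  rw [le_div_iff₀ hc]
  nlinarith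

lemma sqrt_mul_mul_sqrt_div {t : ℝ} (ht : 0 < t) {k : ℝ} (hk : 0 ≤ k) (x : ℝ) :
    √(t * x) * √k / t = √(k * x / t) := by
  rw [Real.sqrt_mul ht.le, Real.sqrt_div' _ ht.le, Real.sqrt_mul hk]
  have hsq : √t ^ 2 = t := Real.sq_sqrt ht.le
  have hpos : 0 < √t := Real.sqrt_pos.mpr ht
  field_simp
  rw [hsq]
  ring

theorem stmt9_general {d t : ℕ} (X : Matrix (Fin d) (Fin t) ℝ) (Δ : Fin d → ℝ)
    (S : Finset (Fin d)) (k : ℕ) (lam C σ R δ : ℝ)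
    (ht : 0 < t) (hk : S.card = k) (hC : 0 < C) (hσ : 0 < σ) (hR : 0 < R)
    (hlam : lam = 2 * σ * R * Real.sqrt (2 * t * Real.log (2 * d / δ)))
    (hbasic : (∑ j, (∑ i, X i j * Δ i) ^ 2) ≤
        lam / 2 * (∑ i, |Δ i|) +
        lam * ((∑ i ∈ S, |Δ i|) - ∑ i ∈ Sᶜ, |Δ i|))
    (hRE : C * t * (∑ i, (Δ i) ^ 2) ≤ ∑ j, (∑ i, X i j * Δ i) ^ 2) :
    Real.sqrt (∑ i, (Δ i) ^ 2) ≤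
      3 * σ * R / C * Real.sqrt (2 * k * Real.log (2 * d / δ) / t) := by
  set L := Real.log (2 * d / δ)
  set a := √(∑ i, Δ i ^ 2)
  have ht' : (0 : ℝ) < t := Nat.cast_pos.mpr ht
  have hlam0 : 0 ≤ lam := by rw [hlam]; positivity
  have hcone := le_of_le_basic_lasso S Δ hlam0 hbasic
  have hS : ∑ i ∈ S, |Δ i| ≤ √(k : ℝ) * a := hk ▸ sum_abs_le_sqrt_card_mul_sqrt_sum_sq S Δ
  have hquad : C * t * a ^ 2 ≤ 3 / 2 * lam * √(k : ℝ) * a := by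
    rw [Real.sq_sqrt (sum_nonneg fun i _ => sq_nonneg _)]
    calc C * t * ∑ i, Δ i ^ 2 ≤ 3 / 2 * lam * ∑ i ∈ S, |Δ i| := hRE.trans hcone
      _ ≤ 3 / 2 * lam * (√(k : ℝ) * a) := by gcongr
      _ = 3 / 2 * lam * √(k : ℝ) * a := by ring
  calc a ≤ 3 / 2 * lam * √(k : ℝ) / (C * t) :=
        le_div_of_mul_sq_le_mul (by positivity) (Real.sqrt_nonneg _) (by positivity) hquad
    _ = 3 * σ * R / C * (√(t * (2 * L)) * √(k : ℝ) / t) := by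
        rw [hlam, mul_assoc 2 (t : ℝ)]; field_simp
    _ = 3 * σ * R / C * √(2 * k * L / t) := by
        rw [sqrt_mul_mul_sqrt_div ht' (Nat.cast_nonneg k), ← mul_assoc, mul_comm (k : ℝ) 2]

/-- Lasso recovery rate. Under the basic Lasso inequality
‖X^⊤Δ‖₂² ≤ (λ/2)‖Δ‖₁ + λ(‖Δ_S‖₁ − ‖Δ_{S^c}‖₁) with |S| = k, if additionally
the restricted eigenvalue condition ‖X^⊤Δ‖₂² ≥ C·t·‖Δ‖₂² holds with C > 0 and
λ = 2σR√(2t·log(2d/δ)), then ‖Δ‖₂ ≤ (3σR/C)·√(2k·log(2d/δ)/t). -/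
theorem stmt9 {d t : ℕ} (X : Matrix (Fin d) (Fin t) ℝ) (Δ : Fin d → ℝ)
    (S : Finset (Fin d)) (k : ℕ) (lam C σ R δ : ℝ)
    (ht : 0 < t) (hk : S.card = k) (hC : 0 < C) (hσ : 0 < σ) (hR : 0 < R)
    (hδ0 : 0 < δ) (hδ1 : δ < 1)
    (hlam : lam = 2 * σ * R * Real.sqrt (2 * t * Real.log (2 * d / δ)))
    (hbasic : (∑ j, (∑ i, X i j * Δ i) ^ 2) ≤
        lam / 2 * (∑ i, |Δ i|) +
        lam * ((∑ i ∈ S, |Δ i|) - ∑ i ∈ Sᶜ, |Δ i|))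
    (hRE : C * t * (∑ i, (Δ i) ^ 2) ≤ ∑ j, (∑ i, X i j * Δ i) ^ 2) :
    Real.sqrt (∑ i, (Δ i) ^ 2) ≤
      3 * σ * R / C * Real.sqrt (2 * k * Real.log (2 * d / δ) / t) :=
  stmt9_general X Δ S k lam C σ R δ ht hk hC hσ hR hlam hbasic hRE
end

section
/- Let e ~ N(0,σ₁²) and let e_c be its censoring to the interval [a,b] (equal to e if e ∈ [a,b], to b if e > b, to a if e < a), where 0 ∈ [a,b] and b − a = 2q with q ≥ σ₁. Then the variance of e_c is minimized over such intervals when a = 0 or b = 0, i.e., Var(e_c) ≥ Var of the censoring to [0, 2q]. -/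
open MeasureTheory ProbabilityTheory Set Filter Topology Real
open scoped NNReal ENNReal

/-!
Write `Φ` and `φ` for the CDF and density of `N(0, v)`. Since `clamp a b x = b - ∫_a^b 1{x ≤ t} dt`
and `(clamp a b x)² = b² - ∫_a^b 2t 1{x ≤ t} dt`, Fubini gives
`Var (clamp a b) = b² - ∫_a^b 2tΦ(t) dt - (b - ∫_a^b Φ)²`, a differentiable function of the shift
`α` of the window `[-α, w - α]`. Its derivative is
`2 ((1 - Φ α) ∫ (1 - Φ) - (1 - Φ (w - α)) ∫ Φ)` over the window, and this is nonnegative for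
`0 ≤ α ≤ w / 2` because the Mills ratio `(1 - Φ) / φ` is antitone, which is the tail bound
`t (1 - Φ t) ≤ v φ t`. The reflection `x ↦ -x` preserves the law and maps the window at shift `α`
to the one at shift `w - α`, which covers `α ≥ w / 2`.
-/

lemma Continuous.hasDerivAt_intervalIntegral_comp {f u w : ℝ → ℝ} {u' w' x : ℝ}
    (hf : Continuous f) (hu : HasDerivAt u u' x) (hw : HasDerivAt w w' x) :
    HasDerivAt (fun y => ∫ t in u y..w y, f t) (f (w x) * w' - f (u x) * u') x := by
  have hF (y : ℝ) := (hf.integral_hasStrictDerivAt 0 y).hasDerivAt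
  have : (fun y => ∫ t in u y..w y, f t) = fun y => (∫ t in 0..w y, f t) - ∫ t in 0..u y, f t := by
    ext y
    rw [intervalIntegral.integral_interval_sub_left (hf.intervalIntegrable _ _)
      (hf.intervalIntegrable _ _)]
  rw [this]
  exact ((hF (w x)).comp x hw).sub ((hF (u x)).comp x hu)

namespace CensoredGaussian

def clamp (a b x : ℝ) : ℝ := max a (min b x)

section Clamp

variable {a b : ℝ}

lemma continuous_clamp (a b : ℝ) : Continuous (clamp a b) := by
  unfold clamp; fun_prop

lemma abs_clamp_le (a b x : ℝ) : |clamp a b x| ≤ max |a| |b| :=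
  abs_le.2 ⟨(neg_le_neg (le_max_left _ _)).trans ((neg_abs_le a).trans (le_max_left _ _)),
    max_le_max (le_abs_self a) ((min_le_left b x).trans (le_abs_self b))⟩

lemma clamp_neg (hab : a ≤ b) (x : ℝ) : clamp a b (-x) = -clamp (-b) (-a) x := by
  simp only [clamp]; grind

lemma memLp_clamp (μ : Measure ℝ) [IsFiniteMeasure μ] (a b : ℝ) (p : ℝ≥0∞) :
    MemLp (clamp a b) p μ :=
  MemLp.of_bound (continuous_clamp a b).aestronglyMeasurable _
    (ae_of_all _ fun x => (abs_clamp_le a b x))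

lemma intervalIntegral_indicator_Ici (hab : a ≤ b) {g : ℝ → ℝ}
    (hg : IntervalIntegrable g volume a b) (x : ℝ) :
    ∫ t in a..b, (Ici x).indicator g t = ∫ t in clamp a b x..b, g t := by
  have hac : a ≤ clamp a b x := le_max_left _ _
  have hcb : clamp a b x ≤ b := max_le hab (min_le_left _ _)
  have hind : IntervalIntegrable ((Ici x).indicator g) volume a b :=
    ⟨hg.1.indicator measurableSet_Ici, hg.2.indicator measurableSet_Ici⟩
  have hmem : clamp a b x ∈ uIcc a b := by rw [uIcc_of_le hab]; exact ⟨hac, hcb⟩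
  rw [← intervalIntegral.integral_add_adjacent_intervals (b := clamp a b x)
    (hind.mono_set (uIcc_subset_uIcc left_mem_uIcc hmem))
    (hind.mono_set (uIcc_subset_uIcc hmem right_mem_uIcc))]
  have below : ∫ t in a..clamp a b x, (Ici x).indicator g t = 0 := by
    refine (intervalIntegral.integral_congr_ae ?_).trans intervalIntegral.integral_zero
    filter_upwards [(countable_singleton x).ae_notMem volume] with t hxt ht
    rw [uIoc_of_le hac] at ht
    have : t < x := by simp only [clamp, mem_singleton_iff, mem_Ioc] at hxt ht; grind
    simp [not_le.mpr this]
  have above : ∫ t in clamp a b x..b, (Ici x).indicator g t = ∫ t in clamp a b x..b, g t := by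
    refine intervalIntegral.integral_congr_ae (ae_of_all _ fun t ht => ?_)
    rw [uIoc_of_le hcb] at ht
    have : x ≤ t := by simp only [clamp] at ht; grind
    simp [this]
  rw [below, above, zero_add]

lemma variance_clamp_of_map_neg {μ : Measure ℝ} (hμ : μ.map (fun x => -x) = μ)
    (hab : a ≤ b) : Var[clamp a b; μ] = Var[clamp (-b) (-a); μ] := by
  conv_lhs => rw [← hμ]
  rw [variance_map (continuous_clamp a b).aemeasurable measurable_neg.aemeasurable]
  have : clamp a b ∘ (fun x => -x) = -clamp (-b) (-a) := funext (clamp_neg hab)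
  rw [this, variance_neg]

variable (μ : Measure ℝ) [IsProbabilityMeasure μ]

lemma integral_intervalIntegral_clamp (hab : a ≤ b) {g : ℝ → ℝ}
    (hg : IntervalIntegrable g volume a b) :
    ∫ x, (∫ t in clamp a b x..b, g t) ∂μ = ∫ t in a..b, g t * cdf μ t := by
  simp_rw [← intervalIntegral_indicator_Ici hab hg, intervalIntegral.integral_of_le hab]
  have hint : Integrable (Function.uncurry fun x t => (Ici x).indicator g t)
      (μ.prod (volume.restrict (Ioc a b))) := by
    have : (Function.uncurry fun x t => (Ici x).indicator g t)
        = {p : ℝ × ℝ | p.1 ≤ p.2}.indicator (fun p => g p.2) := by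
      ext ⟨x, t⟩; simp [indicator]
    rw [this]
    exact (hg.1.comp_snd μ).indicator (measurableSet_le measurable_fst measurable_snd)
  rw [integral_integral_swap hint]
  refine integral_congr_ae (ae_of_all _ fun t => ?_)
  have : (fun x => (Ici x).indicator g t) = (Iic t).indicator (fun _ => g t) := by
    ext x; simp [indicator]
  simp only [this, integral_indicator_const _ measurableSet_Iic, cdf_eq_real, smul_eq_mul,
    mul_comm]

lemma integral_clamp (hab : a ≤ b) : ∫ x, clamp a b x ∂μ = b - ∫ t in a..b, cdf μ t := by
  have h := integral_intervalIntegral_clamp μ hab (g := fun _ => 1) intervalIntegrable_const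
  simp only [intervalIntegral.integral_const, smul_eq_mul, mul_one, one_mul] at h
  rw [integral_sub (integrable_const _) (memLp_one_iff_integrable.mp (memLp_clamp μ a b 1))] at h
  simp only [integral_const, probReal_univ, smul_eq_mul, one_mul] at h
  linarith

lemma integral_clamp_sq (hab : a ≤ b) :
    ∫ x, clamp a b x ^ 2 ∂μ = b ^ 2 - ∫ t in a..b, 2 * t * cdf μ t := by
  have h := integral_intervalIntegral_clamp μ hab (g := fun t => 2 * t)
    ((continuous_const_mul 2).intervalIntegrable _ _)
  have hsq (c : ℝ) : ∫ t in c..b, 2 * t = b ^ 2 - c ^ 2 := by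
    rw [intervalIntegral.integral_const_mul, integral_id]; ring
  simp only [hsq] at h
  rw [integral_sub (integrable_const _) (memLp_clamp μ a b 2).integrable_sq] at h
  simp only [integral_const, probReal_univ, smul_eq_mul, one_mul] at h
  linarith

lemma variance_clamp (hab : a ≤ b) :
    Var[clamp a b; μ] =
      (b ^ 2 - ∫ t in a..b, 2 * t * cdf μ t) - (b - ∫ t in a..b, cdf μ t) ^ 2 := by
  rw [variance_eq_sub (memLp_clamp μ a b 2), ← integral_clamp μ hab, ← integral_clamp_sq μ hab]
  rfl

end Clamp

section Gaussian

variable {v : ℝ≥0}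

lemma hasDerivAt_gaussianPDFReal (m : ℝ) (v : ℝ≥0) (x : ℝ) :
    HasDerivAt (gaussianPDFReal m v) (-((x - m) / v) * gaussianPDFReal m v x) x := by
  have hexp : HasDerivAt (fun y => -(y - m) ^ 2 / (2 * v)) (-((x - m) / v)) x := by
    refine ((((hasDerivAt_id x).sub_const m).pow 2).neg.div_const (2 * (v : ℝ))).congr_deriv ?_
    simp only [id, Nat.cast_ofNat, mul_one]
    ring
  refine (((hasDerivAt_exp _).comp x hexp).const_mul (√(2 * π * v))⁻¹).congr_deriv ?_
  simp only [gaussianPDFReal]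
  ring

lemma tendsto_gaussianPDFReal_atTop (m : ℝ) (hv : v ≠ 0) :
    Tendsto (gaussianPDFReal m v) atTop (𝓝 0) := by
  have hv' : (0 : ℝ) < 2 * v := by positivity
  have : Tendsto (fun x => -(x - m) ^ 2 / (2 * v)) atTop atBot :=
    (tendsto_neg_atTop_atBot.comp ((tendsto_pow_atTop two_ne_zero).comp
      (tendsto_atTop_add_const_right _ _ tendsto_id))).atBot_div_const hv'
  rw [gaussianPDFReal_def]
  simpa using (tendsto_exp_atBot.comp this).const_mul (√(2 * π * v))⁻¹

lemma continuous_gaussianPDFReal (m : ℝ) (v : ℝ≥0) : Continuous (gaussianPDFReal m v) :=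
  continuous_iff_continuousAt.2 fun x => (hasDerivAt_gaussianPDFReal m v x).continuousAt

lemma gaussianPDFReal_zero_neg (v : ℝ≥0) (x : ℝ) :
    gaussianPDFReal 0 v (-x) = gaussianPDFReal 0 v x := by
  simp [gaussianPDFReal]

lemma cdf_gaussianReal_eq_integral (m : ℝ) (hv : v ≠ 0) (t : ℝ) :
    cdf (gaussianReal m v) t = ∫ x in Iic t, gaussianPDFReal m v x := by
  rw [cdf_eq_real, measureReal_def, gaussianReal_apply_eq_integral m hv, ENNReal.toReal_ofReal
    (setIntegral_nonneg measurableSet_Iic fun x _ => gaussianPDFReal_nonneg m v x)]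

lemma one_sub_cdf_gaussianReal_eq_integral (m : ℝ) (hv : v ≠ 0) (t : ℝ) :
    1 - cdf (gaussianReal m v) t = ∫ x in Ioi t, gaussianPDFReal m v x := by
  rw [cdf_eq_real, ← probReal_compl_eq_one_sub measurableSet_Iic, compl_Iic, measureReal_def,
    gaussianReal_apply_eq_integral m hv, ENNReal.toReal_ofReal
    (setIntegral_nonneg measurableSet_Ioi fun x _ => gaussianPDFReal_nonneg m v x)]

lemma hasDerivAt_cdf_gaussianReal (m : ℝ) (hv : v ≠ 0) (t : ℝ) :
    HasDerivAt (cdf (gaussianReal m v)) (gaussianPDFReal m v t) t := by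
  have hφ := continuous_gaussianPDFReal m v
  have : ⇑(cdf (gaussianReal m v)) =
      fun s => cdf (gaussianReal m v) 0 + ∫ x in 0..s, gaussianPDFReal m v x := by
    ext s
    rw [cdf_gaussianReal_eq_integral m hv, cdf_gaussianReal_eq_integral m hv,
      ← intervalIntegral.integral_Iic_sub_Iic (integrable_gaussianPDFReal m v).integrableOn
      (integrable_gaussianPDFReal m v).integrableOn]
    ring
  rw [this]
  exact (hφ.integral_hasStrictDerivAt 0 t).hasDerivAt.const_add _

lemma continuous_cdf_gaussianReal (m : ℝ) (hv : v ≠ 0) : Continuous (cdf (gaussianReal m v)) :=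
  continuous_iff_continuousAt.2 fun t => (hasDerivAt_cdf_gaussianReal m hv t).continuousAt

lemma cdf_gaussianReal_neg (hv : v ≠ 0) (t : ℝ) :
    cdf (gaussianReal 0 v) (-t) = 1 - cdf (gaussianReal 0 v) t := by
  have h := integral_comp_neg_Iic (-t) (gaussianPDFReal 0 v)
  simp only [neg_neg, gaussianPDFReal_zero_neg] at h
  rw [cdf_gaussianReal_eq_integral 0 hv, one_sub_cdf_gaussianReal_eq_integral 0 hv, h]

end Gaussian

section MillsRatio

variable {v : ℝ≥0}

local notation "Φ" => cdf (gaussianReal 0 v)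
local notation "φ" => gaussianPDFReal 0 v

lemma mul_one_sub_cdf_gaussianReal_le (hv : v ≠ 0) (t : ℝ) : t * (1 - Φ t) ≤ v * φ t := by
  rcases le_or_gt t 0 with ht | ht
  · exact (mul_nonpos_of_nonpos_of_nonneg ht (sub_nonneg.2 (cdf_le_one _ t))).trans
      (mul_nonneg v.2 (gaussianPDFReal_nonneg 0 v t))
  have hv' : (v : ℝ) ≠ 0 := NNReal.coe_ne_zero.2 hv
  have hderiv (x : ℝ) (_ : x ∈ Ioi t) :
      HasDerivAt (fun y => -(v : ℝ) * φ y) (x * φ x) x :=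
    ((hasDerivAt_gaussianPDFReal 0 v x).const_mul (-(v : ℝ))).congr_deriv (by field_simp; ring)
  have hpos (x : ℝ) (hx : x ∈ Ioi t) : 0 ≤ x * φ x :=
    mul_nonneg (ht.trans hx).le (gaussianPDFReal_nonneg 0 v x)
  have htend : Tendsto (fun y => -(v : ℝ) * φ y) atTop (𝓝 0) := by
    simpa using (tendsto_gaussianPDFReal_atTop 0 hv).const_mul (-(v : ℝ))
  have hcont : ContinuousWithinAt (fun y => -(v : ℝ) * φ y) (Ici t) t :=
    (continuous_const.mul (continuous_gaussianPDFReal 0 v)).continuousWithinAt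
  calc t * (1 - Φ t) = ∫ x in Ioi t, t * φ x := by
        rw [one_sub_cdf_gaussianReal_eq_integral 0 hv, integral_const_mul]
    _ ≤ ∫ x in Ioi t, x * φ x :=
        setIntegral_mono_on ((integrable_gaussianPDFReal 0 v).integrableOn.const_mul t)
          (integrableOn_Ioi_deriv_of_nonneg hcont hderiv hpos htend) measurableSet_Ioi
          fun x hx => mul_le_mul_of_nonneg_right (le_of_lt hx) (gaussianPDFReal_nonneg 0 v x)
    _ = v * φ t := by
        rw [integral_Ioi_of_hasDerivAt_of_nonneg hcont hderiv hpos htend]; ring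

lemma antitone_millsRatio (hv : v ≠ 0) : Antitone fun t => (1 - Φ t) / φ t := by
  refine antitone_of_hasDerivAt_nonpos
    (fun t => ((hasDerivAt_cdf_gaussianReal 0 hv t).const_sub 1).div
      (hasDerivAt_gaussianPDFReal 0 v t) (gaussianPDFReal_pos 0 v t hv).ne') fun t => ?_
  have hv' : (v : ℝ) ≠ 0 := NNReal.coe_ne_zero.2 hv
  have hnum : -φ t * φ t - (1 - Φ t) * (-((t - 0) / v) * φ t)
      = (φ t / v) * (t * (1 - Φ t) - v * φ t) := by
    field_simp; ring
  rw [hnum]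
  exact div_nonpos_of_nonpos_of_nonneg (mul_nonpos_of_nonneg_of_nonpos
    (div_nonneg (gaussianPDFReal_nonneg 0 v t) v.2)
    (sub_nonpos.2 (mul_one_sub_cdf_gaussianReal_le hv t))) (sq_nonneg _)

lemma one_sub_cdf_mul_pdf_le (hv : v ≠ 0) {d t : ℝ} (h : -d ≤ t) :
    (1 - Φ d) * φ t ≤ φ d * Φ t := by
  have := antitone_millsRatio hv (show -t ≤ d by linarith)
  simp only [cdf_gaussianReal_neg hv, gaussianPDFReal_zero_neg, sub_sub_cancel] at this
  rw [div_le_div_iff₀ (gaussianPDFReal_pos 0 v d hv) (gaussianPDFReal_pos 0 v t hv)] at this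
  linarith

lemma integral_cdf_gaussianReal_neg_self (hv : v ≠ 0) (c : ℝ) : ∫ t in -c..c, Φ t = c := by
  have h := intervalIntegral.integral_comp_neg (a := -c) (b := c) Φ
  simp only [neg_neg, cdf_gaussianReal_neg hv] at h
  rw [intervalIntegral.integral_sub intervalIntegrable_const
    ((continuous_cdf_gaussianReal 0 hv).intervalIntegrable _ _)] at h
  simp only [intervalIntegral.integral_const, smul_eq_mul, mul_one] at h
  linarith

lemma one_sub_cdf_mul_integral_cdf_le (hv : v ≠ 0) {c d : ℝ} (hc : 0 ≤ c) (hcd : c ≤ d) :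
    (1 - Φ d) * ∫ t in -c..d, Φ t ≤ (1 - Φ c) * ∫ t in -c..d, (1 - Φ t) := by
  have hΦ := continuous_cdf_gaussianReal 0 hv
  set R : ℝ → ℝ := fun y => (1 - Φ c) * (∫ t in -c..y, (1 - Φ t)) - (1 - Φ y) * ∫ t in -c..y, Φ t
  set R' : ℝ → ℝ := fun y => (1 - Φ c) * (1 - Φ y) - (-φ y * (∫ t in -c..y, Φ t) + (1 - Φ y) * Φ y)
  have hR (y : ℝ) : HasDerivAt R (R' y) y :=
    (((continuous_const.sub hΦ).integral_hasStrictDerivAt (-c) y).hasDerivAt.const_mul _).sub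
      (((hasDerivAt_cdf_gaussianReal 0 hv y).const_sub 1).mul
        (hΦ.integral_hasStrictDerivAt (-c) y).hasDerivAt)
  -- as `1 - Φ c = Φ (-c)`, `R' y` is the integral of `φ y * Φ t - (1 - Φ y) * φ t` over `[-c, y]`
  have hR'_nonneg (y : ℝ) (hy : c ≤ y) : 0 ≤ R' y := by
    have hφ : ∫ t in -c..y, φ t = Φ y - Φ (-c) :=
      intervalIntegral.integral_eq_sub_of_hasDerivAt (fun t _ => hasDerivAt_cdf_gaussianReal 0 hv t)
        ((continuous_gaussianPDFReal 0 v).intervalIntegrable _ _)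
    have hint : ∫ t in -c..y, (φ y * Φ t - (1 - Φ y) * φ t) = R' y := by
      rw [intervalIntegral.integral_sub ((hΦ.intervalIntegrable _ _).const_mul _)
        (((continuous_gaussianPDFReal 0 v).intervalIntegrable _ _).const_mul _),
        intervalIntegral.integral_const_mul, intervalIntegral.integral_const_mul, hφ,
        cdf_gaussianReal_neg hv]
      ring
    rw [← hint]
    refine intervalIntegral.integral_nonneg (by linarith) fun t ht => ?_
    linarith [one_sub_cdf_mul_pdf_le hv (show -y ≤ t by linarith [ht.1])]
  have hmono : MonotoneOn R (Ici c) :=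
    monotoneOn_of_hasDerivWithinAt_nonneg (convex_Ici c)
      (fun y _ => (hR y).continuousAt.continuousWithinAt) (fun y _ => (hR y).hasDerivWithinAt)
      fun y hy => hR'_nonneg y (by rw [interior_Ici] at hy; exact le_of_lt hy)
  have hRc : R c = 0 := by
    simp only [R, intervalIntegral.integral_const, integral_cdf_gaussianReal_neg_self hv,
      intervalIntegral.integral_sub intervalIntegrable_const (hΦ.intervalIntegrable _ _)]
    ring
  have := hmono self_mem_Ici hcd hcd
  simp only [hRc, R] at this
  linarith

end MillsRatio

section Shift

variable {v : ℝ≥0} {w : ℝ}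

local notation "Φ" => cdf (gaussianReal 0 v)

lemma hasDerivAt_variance_clamp_shift (hv : v ≠ 0) (hw : 0 ≤ w) (α : ℝ) :
    HasDerivAt (fun α => Var[clamp (-α) (w - α); gaussianReal 0 v])
      (2 * ((1 - Φ α) * (∫ t in -α..w - α, (1 - Φ t)) - (1 - Φ (w - α)) * ∫ t in -α..w - α, Φ t))
      α := by
  have hΦ := continuous_cdf_gaussianReal 0 hv
  have hlo : HasDerivAt (fun α : ℝ => -α) (-1) α := hasDerivAt_neg α
  have hhi : HasDerivAt (fun α : ℝ => w - α) (-1) α := by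
    simpa using (hasDerivAt_id α).const_sub w
  have hI := hΦ.hasDerivAt_intervalIntegral_comp hlo hhi
  have hJ := ((continuous_const_mul 2).mul hΦ).hasDerivAt_intervalIntegral_comp hlo hhi
  have hV : (fun α => Var[clamp (-α) (w - α); gaussianReal 0 v]) = fun α =>
      ((w - α) ^ 2 - ∫ t in -α..w - α, 2 * t * Φ t) - ((w - α) - ∫ t in -α..w - α, Φ t) ^ 2 := by
    ext α
    exact variance_clamp _ (by linarith)
  rw [hV]
  refine (((hhi.pow 2).sub hJ).sub ((hhi.sub hI).pow 2)).congr_deriv ?_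
  rw [intervalIntegral.integral_sub intervalIntegrable_const (hΦ.intervalIntegrable _ _),
    intervalIntegral.integral_const]
  simp only [smul_eq_mul, Pi.mul_apply, Pi.sub_apply, cdf_gaussianReal_neg hv]
  ring

lemma monotoneOn_variance_clamp_shift (hv : v ≠ 0) (hw : 0 ≤ w) :
    MonotoneOn (fun α => Var[clamp (-α) (w - α); gaussianReal 0 v]) (Icc 0 (w / 2)) := by
  have hV := hasDerivAt_variance_clamp_shift hv hw
  refine monotoneOn_of_hasDerivWithinAt_nonneg (convex_Icc _ _)
    (fun α _ => (hV α).continuousAt.continuousWithinAt) (fun α _ => (hV α).hasDerivWithinAt)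
    fun α hα => ?_
  rw [interior_Icc] at hα
  linarith [one_sub_cdf_mul_integral_cdf_le hv hα.1.le (show α ≤ w - α by linarith [hα.2])]

end Shift

end CensoredGaussian

open CensoredGaussian in
theorem stmt13_general (σ₁ q a b : ℝ) (hσ : 0 < σ₁)
    (ha : a ≤ 0) (hb : 0 ≤ b) (hab : b - a = 2 * q) :
    variance (fun x => max 0 (min (2 * q) x)) (gaussianReal 0 ((σ₁ ^ 2).toNNReal)) ≤
      variance (fun x => max a (min b x)) (gaussianReal 0 ((σ₁ ^ 2).toNNReal)) := by
  show Var[clamp 0 (2 * q); _] ≤ Var[clamp a b; _]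
  have hv : (σ₁ ^ 2).toNNReal ≠ 0 := by simpa [Real.toNNReal_eq_zero] using hσ.ne'
  have hmono := monotoneOn_variance_clamp_shift hv (w := 2 * q) (by linarith)
  rcases le_total (-a) q with h | h
  · simpa [show 2 * q - -a = b by linarith] using
      hmono ⟨le_rfl, by linarith⟩ ⟨by linarith, by linarith⟩ (by linarith : 0 ≤ -a)
  · rw [variance_clamp_of_map_neg (by rw [gaussianReal_map_neg, neg_zero]) (by linarith : a ≤ b)]
    simpa [show 2 * q - b = -a by linarith] using
      hmono ⟨le_rfl, by linarith⟩ ⟨hb, by linarith⟩ hb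

/-- Variance of the censored (clamped) Gaussian is minimized at a boundary
interval: for e ~ N(0,σ₁²) censored to [a,b] with 0 ∈ [a,b], b − a = 2q and
q ≥ σ₁, the variance is at least that of the censoring to [0, 2q]. -/
theorem stmt13 (σ₁ q a b : ℝ) (hσ : 0 < σ₁) (hq : σ₁ ≤ q)
    (ha : a ≤ 0) (hb : 0 ≤ b) (hab : b - a = 2 * q) :
    variance (fun x => max 0 (min (2 * q) x)) (gaussianReal 0 ((σ₁ ^ 2).toNNReal)) ≤
      variance (fun x => max a (min b x)) (gaussianReal 0 ((σ₁ ^ 2).toNNReal)) :=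
  stmt13_general σ₁ q a b hσ ha hb hab
end
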